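/- N(φ) < ∞ if and only if all ratios of nonzero coordinates of φ in the computational basis lie in ℚ(i). Equivalently, some nonzero complex multiple of φ lies in BW_n iff φ is a ℂ*-multiple of a vector in ℚ(i)^{2^n}. -/

import Mathlib

/-- Generator `|x̃⟩` of the Barnes Wall lattice: the tensor product of `|0⟩`
(where `x i = false`) and `(1/(1+i))(|0⟩+|1⟩)` (where `x i = true`). -/
noncomputable def bwGen (n : ℕ) (x : Fin n → Bool) :
    EuclideanSpace ℂ (Fin n → Fin 2) :=
  WithLp.toLp 2 fun y => ∏ i : Fin n,
    (if x i then (1 + Complex.I)⁻¹ else if y i = 0 then 1 else 0)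

/-- Membership in the Barnes Wall lattice `BW_n`: the `ℤ[i]`-span of the `bwGen n x`. -/
def memBW (n : ℕ) (v : EuclideanSpace ℂ (Fin n → Fin 2)) : Prop :=
  ∃ a : (Fin n → Bool) → GaussianInt,
    v = ∑ x : Fin n → Bool, (GaussianInt.toComplex (a x)) • bwGen n x

/-!
Every entry of a generator of `BW_n` lies in `ℚ(i)`, since `(1 + i)⁻¹ = (1 - i)/2`, hence so does
every entry of a lattice vector. Conversely, every computational basis vector lies in `BW_n`:
for one qubit, `|1⟩ = (1 + i) · (1/(1+i))(|0⟩ + |1⟩) - |0⟩`, and the tensor product of these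
expansions expresses `|y⟩`. So every vector with entries in `ℤ[i]` lies in `BW_n`, and a vector
with entries in `ℚ(i)` gets there after multiplying by a common denominator of its entries.
-/

open Complex

def gaussianRat : Subring ℂ where
  carrier := {z | ∃ p q : ℚ, z = (p : ℂ) + (q : ℂ) * I}
  mul_mem' := by
    rintro _ _ ⟨p, q, rfl⟩ ⟨p', q', rfl⟩
    refine ⟨p * p' - q * q', p * q' + q * p', ?_⟩
    push_cast
    linear_combination (q : ℂ) * q' * I_mul_I
  one_mem' := ⟨1, 0, by simp⟩
  add_mem' := by
    rintro _ _ ⟨p, q, rfl⟩ ⟨p', q', rfl⟩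
    exact ⟨p + p', q + q', by push_cast; ring⟩
  zero_mem' := ⟨0, 0, by simp⟩
  neg_mem' := by
    rintro _ ⟨p, q, rfl⟩
    exact ⟨-p, -q, by push_cast; ring⟩

lemma toComplex_mem_gaussianRat (g : GaussianInt) : GaussianInt.toComplex g ∈ gaussianRat :=
  ⟨g.re, g.im, by rw [GaussianInt.toComplex_def]; push_cast; ring⟩

lemma inv_one_add_I_mem_gaussianRat : (1 + I)⁻¹ ∈ gaussianRat := by
  refine ⟨1 / 2, -(1 / 2), inv_eq_of_mul_eq_one_right ?_⟩
  push_cast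
  linear_combination (-(1 : ℂ) / 2) * I_mul_I

lemma exists_nat_mul_eq_toComplex_of_mem_gaussianRat {z : ℂ} (hz : z ∈ gaussianRat) :
    ∃ d : ℕ, d ≠ 0 ∧ ∃ g : GaussianInt, (d : ℂ) * z = GaussianInt.toComplex g := by
  obtain ⟨p, q, rfl⟩ := hz
  refine ⟨p.den * q.den, mul_ne_zero p.den_nz q.den_nz,
    ⟨p.num * q.den, q.num * p.den⟩, ?_⟩
  have hp : (p : ℂ) * p.den = p.num := by exact_mod_cast p.mul_den_eq_num
  have hq : (q : ℂ) * q.den = q.num := by exact_mod_cast q.mul_den_eq_num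
  rw [GaussianInt.toComplex_def']
  push_cast
  rw [← hp, ← hq]
  ring

lemma exists_nat_mul_eq_toComplex_of_forall_mem_gaussianRat {ι : Type*} [Fintype ι]
    {z : ι → ℂ} (hz : ∀ i, z i ∈ gaussianRat) :
    ∃ d : ℕ, d ≠ 0 ∧ ∀ i, ∃ g : GaussianInt, (d : ℂ) * z i = GaussianInt.toComplex g := by
  classical
  choose d hd g hg using fun i => exists_nat_mul_eq_toComplex_of_mem_gaussianRat (hz i)
  refine ⟨∏ i, d i, Finset.prod_ne_zero_iff.2 fun i _ => hd i, fun i => ?_⟩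
  refine ⟨(∏ j ∈ Finset.univ.erase i, d j : ℕ) * g i, ?_⟩
  rw [← Finset.prod_erase_mul _ _ (Finset.mem_univ i), map_mul, ← hg i, map_natCast]
  push_cast
  ring

noncomputable def bwGenFactor (b : Bool) (t : Fin 2) : ℂ :=
  if b then (1 + I)⁻¹ else if t = 0 then 1 else 0

lemma bwGen_apply (n : ℕ) (x : Fin n → Bool) (y : Fin n → Fin 2) :
    bwGen n x y = ∏ i, bwGenFactor (x i) (y i) :=
  rfl

def basisCoef (s : Fin 2) (b : Bool) : GaussianInt :=
  if s = 0 then (if b then 0 else 1) else (if b then ⟨1, 1⟩ else -1)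

lemma sum_basisCoef_mul_bwGenFactor (s t : Fin 2) :
    ∑ b : Bool, GaussianInt.toComplex (basisCoef s b) * bwGenFactor b t =
      if t = s then 1 else 0 := by
  have h : (1 + I) ≠ 0 := fun h => by simpa using congrArg re h
  fin_cases s <;> fin_cases t <;>
    simp [basisCoef, bwGenFactor, GaussianInt.toComplex_def', h]

def bwBasisCoef (n : ℕ) (y : Fin n → Fin 2) (x : Fin n → Bool) : GaussianInt :=
  ∏ i, basisCoef (y i) (x i)

lemma sum_bwBasisCoef_mul_bwGen (n : ℕ) (y y' : Fin n → Fin 2) :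
    ∑ x, GaussianInt.toComplex (bwBasisCoef n y x) * bwGen n x y' = if y' = y then 1 else 0 := by
  classical
  simp only [bwBasisCoef, bwGen_apply, map_prod, ← Finset.prod_mul_distrib]
  rw [← Fintype.prod_sum fun i b => GaussianInt.toComplex (basisCoef (y i) b) *
    bwGenFactor b (y' i)]
  simp only [sum_basisCoef_mul_bwGenFactor, Finset.prod_ite_zero, Finset.prod_const_one,
    Finset.mem_univ, forall_const, funext_iff]

lemma memBW_iff (n : ℕ) (v : EuclideanSpace ℂ (Fin n → Fin 2)) :
    memBW n v ↔ ∃ a : (Fin n → Bool) → GaussianInt,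
      ∀ y, v y = ∑ x, GaussianInt.toComplex (a x) * bwGen n x y := by
  have key : ∀ (a : (Fin n → Bool) → GaussianInt) y,
      (∑ x, GaussianInt.toComplex (a x) • bwGen n x) y =
        ∑ x, GaussianInt.toComplex (a x) * bwGen n x y := by
    intro a y
    simp [WithLp.ofLp_sum, Finset.sum_apply]
  refine exists_congr fun a => ⟨fun h y => h ▸ key a y, fun h => PiLp.ext fun y => ?_⟩
  rw [h y, key]

lemma apply_mem_gaussianRat_of_memBW {n : ℕ} {v : EuclideanSpace ℂ (Fin n → Fin 2)}
    (hv : memBW n v) (y : Fin n → Fin 2) : v y ∈ gaussianRat := by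
  obtain ⟨a, ha⟩ := (memBW_iff n v).1 hv
  rw [ha y]
  refine Subring.sum_mem _ fun x _ => Subring.mul_mem _ (toComplex_mem_gaussianRat _) ?_
  rw [bwGen_apply]
  refine Subring.prod_mem _ fun i _ => ?_
  unfold bwGenFactor
  split_ifs
  exacts [inv_one_add_I_mem_gaussianRat, Subring.one_mem _, Subring.zero_mem _]

lemma memBW_of_forall_eq_toComplex {n : ℕ} {v : EuclideanSpace ℂ (Fin n → Fin 2)}
    {g : (Fin n → Fin 2) → GaussianInt} (hg : ∀ y, v y = GaussianInt.toComplex (g y)) :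
    memBW n v := by
  refine (memBW_iff n v).2 ⟨fun x => ∑ y, g y * bwBasisCoef n y x, fun y' => ?_⟩
  simp only [map_sum, map_mul, Finset.sum_mul, mul_assoc]
  rw [Finset.sum_comm]
  simp only [← Finset.mul_sum, sum_bwBasisCoef_mul_bwGen, mul_ite, mul_one, mul_zero,
    Finset.sum_ite_eq, Finset.mem_univ, if_true, hg]

theorem stmt_14 (n : ℕ) (φ : EuclideanSpace ℂ (Fin n → Fin 2)) :
    (∃ c : ℂ, c ≠ 0 ∧ memBW n (c • φ)) ↔
      (∃ c : ℂ, c ≠ 0 ∧ ∀ y : Fin n → Fin 2,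
        ∃ p q : ℚ, (c • φ) y = (p : ℂ) + (q : ℂ) * Complex.I) := by
  constructor
  · rintro ⟨c, hc, hφ⟩
    exact ⟨c, hc, apply_mem_gaussianRat_of_memBW hφ⟩
  · rintro ⟨c, hc, hφ⟩
    obtain ⟨d, hd, hg⟩ := exists_nat_mul_eq_toComplex_of_forall_mem_gaussianRat hφ
    choose g hg using hg
    refine ⟨d * c, mul_ne_zero (Nat.cast_ne_zero.2 hd) hc, memBW_of_forall_eq_toComplex (g := g) fun y => ?_⟩
    rw [mul_smul, PiLp.smul_apply, smul_eq_mul, hg]
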